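/- arXiv:1005.3045 — 2 statements merged into one kernel-verified Lean document; each statement's English description precedes it below -/
import Mathlib

section
/- If a finite group G acts on the finite game Γ, then Γ has a G-invariant correlated equilibrium: there exists π ∈ CE(Γ) with π·g = π for all g ∈ G. -/
open Finset
open scoped Classical BigOperators

/-- Expected payoff of the maximizer in a finite two-player zero-sum game with
maximizer utility `u`, when the maximizer plays the mixed strategy `σ` and the
minimizer plays the mixed strategy `θ` (utilities extended by linearity). -/
noncomputable def expPay {A B : Type*} [Fintype A] [Fintype B] (u : A → B → ℝ)
    (σ : A → ℝ) (θ : B → ℝ) : ℝ :=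
  ∑ a, ∑ b, σ a * θ b * u a b

/-- The (minimax) value of the zero-sum game with maximizer utility `u`. -/
noncomputable def gameValue {A B : Type*} [Fintype A] [Fintype B] (u : A → B → ℝ) : ℝ :=
  ⨆ σ : stdSimplex ℝ A, ⨅ θ : stdSimplex ℝ B, expPay u σ.1 θ.1

/-- The maximin strategies: mixed strategies of the maximizer guaranteeing at least the
value of the game against every mixed strategy of the minimizer. -/
def maximin {A B : Type*} [Fintype A] [Fintype B] (u : A → B → ℝ) : Set (A → ℝ) :=
  {σ | σ ∈ stdSimplex ℝ A ∧ ∀ θ ∈ stdSimplex ℝ B, gameValue u ≤ expPay u σ θ}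

/-- `σ` is a good reply to `θ`: it gets at least the value of the game against `θ`. -/
def GoodReply {A B : Type*} [Fintype A] [Fintype B] (u : A → B → ℝ)
    (σ : A → ℝ) (θ : B → ℝ) : Prop :=
  gameValue u ≤ expPay u σ θ

/-- `S` is good against `T`: for every `θ ∈ T` some `σ ∈ S` is a good reply to `θ`. -/
def GoodAgainst {A B : Type*} [Fintype A] [Fintype B] (u : A → B → ℝ)
    (S : Set (A → ℝ)) (T : Set (B → ℝ)) : Prop :=
  ∀ θ ∈ T, ∃ σ ∈ S, GoodReply u σ θ

/-- `S` is good: good against all mixed strategies of the minimizer. -/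
def IsGood {A B : Type*} [Fintype A] [Fintype B] (u : A → B → ℝ)
    (S : Set (A → ℝ)) : Prop :=
  GoodAgainst u S (stdSimplex ℝ B)


/-- The maximizer's utility in the auxiliary zero-sum game `Γ⁰` associated to the finite
game with strategy sets `C i` and utilities `u`.  The maximizer plays a strategy profile
`s`, the minimizer a pair `(rᵢ, tᵢ)` of strategies of some player `i`. -/
noncomputable def uM0 {I : Type*} [Fintype I] {C : I → Type*} [∀ i, Fintype (C i)]
    (u : ∀ i : I, (∀ j, C j) → ℝ) (s : ∀ j, C j) : (Σ i : I, C i × C i) → ℝ :=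
  fun p => if p.2.1 = s p.1 then u p.1 s - u p.1 (Function.update s p.1 p.2.2) else 0

/-- Correlated equilibria of the finite game with strategy sets `C i` and utilities `u`:
distributions `π` on profiles such that no player can gain by deviating from a
recommended strategy `sᵢ` to any `tᵢ`. -/
def CorrEq {I : Type*} [Fintype I] {C : I → Type*} [∀ i, Fintype (C i)]
    (u : ∀ i : I, (∀ j, C j) → ℝ) : Set ((∀ j, C j) → ℝ) :=
  {π | π ∈ stdSimplex ℝ (∀ j, C j) ∧
    ∀ (i : I) (si ti : C i),
      ∑ s : ∀ j, C j,
        (if s i = si then (u i (Function.update s i ti) - u i s) * π s else 0) ≤ 0}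

/-- The product (independent) distributions on strategy profiles. -/
def prodDists {I : Type*} [Fintype I] (C : I → Type*) [∀ i, Fintype (C i)] :
    Set ((∀ j, C j) → ℝ) :=
  {π | ∃ ρ : ∀ i, C i → ℝ, (∀ i, ρ i ∈ stdSimplex ℝ (C i)) ∧
        π = fun s => ∏ i, ρ i (s i)}

/-- An action of a group `G` on a finite game with player set `I`, strategy sets `C i`
and utilities `u`.  `actI` is the left action on players and `actS` the induced left
action on strategy profiles; `diagonal` expresses that the coordinate `g·i` of `g·s`
depends only on the coordinate `i` of `s` (i.e. the profile action is induced by strategy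
maps `g· : C i → C (g·i)`), and `utility_inv` is the utility compatibility condition
`u_{g·i}(g·s) = u_i(s)`. -/
structure GameAction (G : Type*) [Group G] {I : Type*} (C : I → Type*)
    (u : ∀ i : I, (∀ j, C j) → ℝ) where
  actI : G → I → I
  actS : G → (∀ j, C j) → (∀ j, C j)
  actI_one : ∀ i, actI 1 i = i
  actI_mul : ∀ g h i, actI (g * h) i = actI g (actI h i)
  actS_one : ∀ s, actS 1 s = s
  actS_mul : ∀ g h s, actS (g * h) s = actS g (actS h s)
  diagonal : ∀ g s t i, s i = t i → actS g s (actI g i) = actS g t (actI g i)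
  utility_inv : ∀ g i s, u (actI g i) (actS g s) = u i s

set_option maxHeartbeats 1000000 in

lemma exists_stationary {S : Type*} [Fintype S] [Nonempty S] (P : S → S → ℝ)
    (hP : ∀ r t, 0 ≤ P r t) (hrow : ∀ r, ∑ t, P r t = 1) :
    ∃ ρ ∈ stdSimplex ℝ S, ∀ t, ∑ r, ρ r * P r t = ρ t := by
  classical
  set step : (S → ℝ) → (S → ℝ) := fun ρ t => ∑ r, ρ r * P r t with hstep
  have hstep_mem : ∀ ρ ∈ stdSimplex ℝ S, step ρ ∈ stdSimplex ℝ S := by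
    intro ρ hρ
    refine ⟨fun t => Finset.sum_nonneg fun r _ => mul_nonneg (hρ.1 r) (hP r t), ?_⟩
    rw [Finset.sum_comm]
    calc ∑ r, ∑ t, ρ r * P r t = ∑ r, ρ r * ∑ t, P r t := by
          simp [Finset.mul_sum]
      _ = 1 := by simp [hrow, hρ.2]
  set ρ0 : S → ℝ := fun _ => (Fintype.card S : ℝ)⁻¹ with hρ0
  have hcard : (0:ℝ) < (Fintype.card S : ℝ) := by
    have := Fintype.card_pos (α := S); positivity
  have hρ0mem : ρ0 ∈ stdSimplex ℝ S := by
    refine ⟨fun x => by positivity, ?_⟩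
    simp only [hρ0, Finset.sum_const, Finset.card_univ, nsmul_eq_mul]
    field_simp
  set it : ℕ → (S → ℝ) := fun n => step^[n] ρ0 with hit
  have hit_succ : ∀ n, it (n+1) = step (it n) := by
    intro n; simp only [hit]; rw [Function.iterate_succ_apply']
  have hitmem : ∀ n, it n ∈ stdSimplex ℝ S := by
    intro n; induction n with
    | zero => simpa [hit] using hρ0mem
    | succ n ih => rw [hit_succ]; exact hstep_mem _ ih
  have hit_bd : ∀ n t, |it n t| ≤ 1 := by
    intro n t
    rw [abs_of_nonneg ((hitmem n).1 t)]
    calc it n t ≤ ∑ x, it n x :=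
          Finset.single_le_sum (fun x _ => (hitmem n).1 x) (Finset.mem_univ t)
      _ = 1 := (hitmem n).2
  set av : ℕ → (S → ℝ) := fun n t => (∑ k ∈ Finset.range n, it k t) / n with hav
  have havmem : ∀ n : ℕ, av (n+1) ∈ stdSimplex ℝ S := by
    intro n
    constructor
    · intro t
      apply div_nonneg
      · exact Finset.sum_nonneg fun k _ => (hitmem k).1 t
      · positivity
    · show (∑ t, (∑ k ∈ Finset.range (n+1), it k t) / ((n+1:ℕ):ℝ)) = 1
      rw [← Finset.sum_div, Finset.sum_comm]
      have : ∀ k ∈ Finset.range (n+1), ∑ t, it k t = 1 := fun k _ => (hitmem k).2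
      rw [Finset.sum_congr rfl this]
      simp only [Finset.sum_const, Finset.card_range, nsmul_eq_mul, mul_one]
      have : ((n:ℝ)+1) ≠ 0 := by positivity
      push_cast
      field_simp
  obtain ⟨ρ, hρmem, φ, hφ, hconv⟩ :=
    (isCompact_stdSimplex ℝ S).tendsto_subseq (fun n => havmem n)
  refine ⟨ρ, hρmem, ?_⟩
  have hrec : ∀ (n : ℕ) (t : S), step (av n) t = av n t + (it n t - ρ0 t) / n := by
    intro n t
    have h1 : step (av n) t = (∑ k ∈ Finset.range n, it (k+1) t) / n := by
      show (∑ x, (∑ k ∈ Finset.range n, it k x) / (n:ℝ) * P x t) = _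
      calc (∑ x, (∑ k ∈ Finset.range n, it k x) / (n:ℝ) * P x t)
          = ∑ x, (∑ k ∈ Finset.range n, it k x * P x t) / (n:ℝ) := by
            refine Finset.sum_congr rfl fun x _ => ?_
            rw [div_mul_eq_mul_div, Finset.sum_mul]
        _ = (∑ x, ∑ k ∈ Finset.range n, it k x * P x t) / (n:ℝ) := by
            rw [Finset.sum_div]
        _ = (∑ k ∈ Finset.range n, ∑ x, it k x * P x t) / (n:ℝ) := by
            rw [Finset.sum_comm]
        _ = (∑ k ∈ Finset.range n, it (k+1) t) / (n:ℝ) := by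
            congr 1
            exact Finset.sum_congr rfl fun k _ => by rw [hit_succ]
    have h2 : (∑ k ∈ Finset.range n, it (k+1) t)
        = (∑ k ∈ Finset.range n, it k t) + it n t - ρ0 t := by
      have := Finset.sum_range_succ' (fun k => it k t) n
      have h3 := Finset.sum_range_succ (fun k => it k t) n
      have h0 : it 0 t = ρ0 t := rfl
      rw [h3] at this
      linarith [this]
    rw [h1, h2]
    show _ = (∑ k ∈ Finset.range n, it k t) / (n:ℝ) + (it n t - ρ0 t) / n
    rw [add_sub_assoc, add_div]
  -- continuity of step
  have hcont : Continuous step :=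
    continuous_pi fun t => continuous_finset_sum _ fun r _ => (continuous_apply r).mul continuous_const
  have hφtop : Filter.Tendsto (fun n => φ n + 1) Filter.atTop Filter.atTop :=
    Filter.tendsto_atTop_mono (fun n => (hφ.id_le n).trans (Nat.le_succ (φ n))) Filter.tendsto_id
  have hl1 : Filter.Tendsto (fun n => step (av (φ n + 1))) Filter.atTop (nhds (step ρ)) :=
    (hcont.tendsto ρ).comp hconv
  have hl2 : Filter.Tendsto (fun n => step (av (φ n + 1))) Filter.atTop (nhds ρ) := by
    rw [tendsto_pi_nhds]
    intro t
    have e1 : ∀ n, step (av (φ n + 1)) t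
        = av (φ n + 1) t + (it (φ n + 1) t - ρ0 t) / (φ n + 1 : ℕ) := fun n => hrec _ t
    simp only [e1]
    have hA : Filter.Tendsto (fun n => av (φ n + 1) t) Filter.atTop (nhds (ρ t)) := by
      have := tendsto_pi_nhds.mp hconv t
      exact this
    have hB : Filter.Tendsto (fun n => (it (φ n + 1) t - ρ0 t) / ((φ n + 1 : ℕ):ℝ))
        Filter.atTop (nhds 0) := by
      apply squeeze_zero_norm (a := fun n => 2 / ((φ n + 1 : ℕ):ℝ))
      · intro n
        rw [Real.norm_eq_abs, abs_div, Nat.abs_cast]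
        have hbd : |it (φ n + 1) t - ρ0 t| ≤ 2 := by
          have h1 := hit_bd (φ n + 1) t
          have h2 : |ρ0 t| ≤ 1 := by
            rw [abs_of_nonneg (hρ0mem.1 t)]
            show ((Fintype.card S : ℝ))⁻¹ ≤ 1
            rw [inv_le_one_iff₀]
            right
            exact_mod_cast Fintype.card_pos
          calc |it (φ n + 1) t - ρ0 t| ≤ |it (φ n + 1) t| + |ρ0 t| := abs_sub _ _
            _ ≤ 2 := by linarith
        gcongr
      · have hbase : Filter.Tendsto (fun m : ℕ => 2 / (m:ℝ)) Filter.atTop (nhds 0) :=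
          tendsto_const_div_atTop_nhds_zero_nat 2
        exact hbase.comp hφtop
    simpa using hA.add hB
  have : step ρ = ρ := tendsto_nhds_unique hl1 hl2
  intro t
  exact congrFun this t

lemma minimax_alt {A B : Type*} [Fintype A] [Fintype B] [Nonempty A] (u : A → B → ℝ)
    (h : ∀ σ ∈ stdSimplex ℝ A, ∃ b, ∑ a, σ a * u a b < 0) :
    ∃ θ ∈ stdSimplex ℝ B, ∀ a, ∑ b, θ b * u a b < 0 := by
  classical
  set L : (A → ℝ) →ₗ[ℝ] (B → ℝ) :=
    { toFun := fun σ b => ∑ a, σ a * u a b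
      map_add' := by
        intro x y; funext b; simp [add_mul, Finset.sum_add_distrib]
      map_smul' := by
        intro c x; funext b; simp [Finset.mul_sum, mul_assoc] } with hL
  have hLcont : Continuous L :=
    continuous_pi fun b => continuous_finset_sum _ fun a _ => (continuous_apply a).mul continuous_const
  set K : Set (B → ℝ) := L '' stdSimplex ℝ A with hK
  have hKconv : Convex ℝ K := (convex_stdSimplex ℝ A).linear_image L
  have hKcomp : IsCompact K := (isCompact_stdSimplex ℝ A).image hLcont
  set P : Set (B → ℝ) := {y | ∀ b, 0 ≤ y b} with hPdef
  have hPconv : Convex ℝ P := by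
    intro x hx y hy a b ha hb hab
    intro bb
    exact add_nonneg (mul_nonneg ha (hx bb)) (mul_nonneg hb (hy bb))
  have hPclosed : IsClosed P := by
    have : P = ⋂ b, {y : B → ℝ | 0 ≤ y b} := by
      ext y; simp [hPdef, Set.mem_iInter]
    rw [this]
    exact isClosed_iInter fun b => isClosed_le continuous_const (continuous_apply b)
  have hdisj : Disjoint K P := by
    rw [Set.disjoint_left]
    rintro y ⟨σ, hσ, rfl⟩ hyP
    obtain ⟨b, hb⟩ := h σ hσ
    exact absurd (hyP b) (not_le.mpr hb)
  obtain ⟨f, s, t, hKs, hst, hPt⟩ :=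
    geometric_hahn_banach_compact_closed hKconv hKcomp hPconv hPclosed hdisj
  have h0P : (0 : B → ℝ) ∈ P := fun b => le_refl 0
  have ht0 : t < 0 := by have := hPt 0 h0P; simpa using this
  have hs0 : s < 0 := hst.trans ht0
  have hfP : ∀ y ∈ P, 0 ≤ f y := by
    intro y hy
    by_contra hneg
    push_neg at hneg
    set lam : ℝ := t / f y + 1 with hlam
    have hlam0 : 0 < lam := by
      have h2 : 0 < t / f y := div_pos_of_neg_of_neg ht0 hneg
      rw [hlam]
      linarith
    have hmem : lam • y ∈ P := fun b => mul_nonneg hlam0.le (hy b)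
    have := hPt _ hmem
    rw [map_smul] at this
    have hcalc : lam * f y = t + f y := by
      rw [hlam, add_mul, one_mul, div_mul_cancel₀ _ (ne_of_lt hneg)]
    rw [smul_eq_mul, hcalc] at this
    linarith
  set e : B → (B → ℝ) := fun b j => if b = j then 1 else 0 with he
  have heP : ∀ b, e b ∈ P := by
    intro b j; by_cases hbj : b = j <;> simp [he, hbj]
  set θ' : B → ℝ := fun b => f (e b) with hθ'
  have hθ'0 : ∀ b, 0 ≤ θ' b := fun b => hfP _ (heP b)
  have hrepr : ∀ y : B → ℝ, f y = ∑ b, y b * θ' b := by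
    intro y
    have hy : y = ∑ b, y b • e b := pi_eq_sum_univ y
    calc f y = f (∑ b, y b • e b) := by rw [← hy]
      _ = ∑ b, y b • f (e b) := by rw [map_sum]; simp
      _ = ∑ b, y b * θ' b := by simp [hθ', smul_eq_mul]
  set c : ℝ := ∑ b, θ' b with hc
  have hc0 : 0 < c := by
    rcases lt_or_eq_of_le (Finset.sum_nonneg fun b _ => hθ'0 b) with h1 | h1
    · exact h1
    · exfalso
      have hall : ∀ b, θ' b = 0 := by
        intro b
        have := (Finset.sum_eq_zero_iff_of_nonneg fun b _ => hθ'0 b).mp h1.symm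
        exact this b (Finset.mem_univ b)
      set σu : A → ℝ := fun _ => (Fintype.card A : ℝ)⁻¹ with hσu
      have hcardA : (0:ℝ) < (Fintype.card A : ℝ) := by
        have := Fintype.card_pos (α := A); positivity
      have hσumem : σu ∈ stdSimplex ℝ A := by
        refine ⟨fun a => by positivity, ?_⟩
        simp only [hσu, Finset.sum_const, Finset.card_univ, nsmul_eq_mul]
        field_simp
      have h1' : f (L σu) < s := hKs _ ⟨σu, hσumem, rfl⟩
      rw [hrepr] at h1'
      simp only [hall, mul_zero, Finset.sum_const_zero] at h1'
      linarith
  refine ⟨fun b => θ' b / c, ⟨fun b => div_nonneg (hθ'0 b) hc0.le, ?_⟩, ?_⟩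
  · rw [← Finset.sum_div, ← hc, div_self (ne_of_gt hc0)]
  · intro a
    set δa : A → ℝ := fun a' => if a' = a then 1 else 0 with hδ
    have hδmem : δa ∈ stdSimplex ℝ A := by
      refine ⟨fun a' => by by_cases h : a' = a <;> simp [hδ, h], ?_⟩
      simp [hδ]
    have hLδ : L δa = fun b => u a b := by
      funext b
      show (∑ a', (if a' = a then (1:ℝ) else 0) * u a' b) = u a b
      rw [Finset.sum_eq_single a]
      · simp
      · intro a' _ ha'; simp [ha']
      · intro ha; exact absurd (Finset.mem_univ a) ha
    have := hKs _ ⟨δa, hδmem, rfl⟩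
    rw [hrepr, hLδ] at this
    have hlt : ∑ b, u a b * θ' b < 0 := this.trans hs0
    calc ∑ b, θ' b / c * u a b = (∑ b, u a b * θ' b) / c := by
          rw [Finset.sum_div]
          exact Finset.sum_congr rfl fun b _ => by ring
      _ < 0 := div_neg_of_neg_of_pos hlt hc0

lemma cond_split {I : Type*} [Fintype I] {C : I → Type*} [∀ i, Fintype (C i)]
    (ρ : ∀ i, C i → ℝ) (hρ : ∀ i, ∑ c, ρ i c = 1)
    (i : I) (f : (∀ j, C j) → ℝ) (hf : ∀ s e, f (Function.update s i e) = f s) (c : C i) :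
    ∑ s : ∀ j, C j, (if s i = c then (∏ j, ρ j (s j)) * f s else 0)
      = ρ i c * ∑ s : ∀ j, C j, (∏ j, ρ j (s j)) * f s := by
  classical
  set w : (∀ j, C j) → ℝ := fun s => ∏ j ∈ Finset.univ.erase i, ρ j (s j) with hw
  have hw_upd : ∀ s e, w (Function.update s i e) = w s := by
    intro s e
    refine Finset.prod_congr rfl fun j hj => ?_
    rw [Function.update_of_ne (Finset.ne_of_mem_erase hj)]
  have hsplit : ∀ s : ∀ j, C j, (∏ j, ρ j (s j)) = ρ i (s i) * w s :=
    fun s => (Finset.mul_prod_erase Finset.univ (fun j => ρ j (s j)) (Finset.mem_univ i)).symm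
  set W : C i → ℝ := fun c => ∑ s : ∀ j, C j, (if s i = c then w s * f s else 0) with hWdef
  have hW : ∀ c c' : C i, W c = W c' := by
    intro c c'
    set invol : (∀ j, C j) → (∀ j, C j) :=
      fun s => Function.update s i (Equiv.swap c c' (s i)) with hinvol
    have hinv : Function.Involutive invol := by
      intro s
      simp only [hinvol, Function.update_self, Function.update_idem,
        Equiv.swap_apply_self, Function.update_eq_self]
    have key : ∀ s, (if s i = c' then w s * f s else 0)
        = (if (invol s) i = c then w (invol s) * f (invol s) else 0) := by
      intro s
      have h1 : (invol s) i = Equiv.swap c c' (s i) := Function.update_self _ _ _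
      have h2 : ((invol s) i = c) ↔ (s i = c') := by
        rw [h1]
        constructor
        · intro hh
          have := (Equiv.swap c c').injective (a₁ := s i) (a₂ := c')
          apply this
          rw [hh, Equiv.swap_apply_right]
        · intro hh; rw [hh, Equiv.swap_apply_right]
      rw [hw_upd, hf]
      by_cases hcc : s i = c' <;> simp [hcc, h2]
    have hcalc : W c' = W c := by
      calc W c' = ∑ s, (if (invol s) i = c then w (invol s) * f (invol s) else 0) :=
            Finset.sum_congr rfl fun s _ => key s
        _ = W c := Fintype.sum_bijective invol hinv.bijective _
            (fun s => if s i = c then w s * f s else 0) (fun s => rfl)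
    exact hcalc.symm
  have hT : ∀ c0 : C i, ∑ s : ∀ j, C j, (if s i = c0 then (∏ j, ρ j (s j)) * f s else 0)
      = ρ i c0 * W c0 := by
    intro c0
    rw [hWdef]
    simp only [Finset.mul_sum, mul_ite, mul_zero]
    refine Finset.sum_congr rfl fun s _ => ?_
    split_ifs with h
    · rw [hsplit, h]; ring
    · rfl
  have hsum : ∑ s : ∀ j, C j, (∏ j, ρ j (s j)) * f s = W c := by
    calc ∑ s : ∀ j, C j, (∏ j, ρ j (s j)) * f s
        = ∑ s : ∀ j, C j, ∑ c0 : C i, (if s i = c0 then (∏ j, ρ j (s j)) * f s else 0) := by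
          refine Finset.sum_congr rfl fun s _ => ?_
          rw [Finset.sum_ite_eq Finset.univ (s i) (fun _ => (∏ j, ρ j (s j)) * f s)]
          simp
      _ = ∑ c0 : C i, ∑ s : ∀ j, C j, (if s i = c0 then (∏ j, ρ j (s j)) * f s else 0) :=
          Finset.sum_comm
      _ = ∑ c0 : C i, ρ i c0 * W c0 := Finset.sum_congr rfl fun c0 _ => hT c0
      _ = ∑ c0 : C i, ρ i c0 * W c := Finset.sum_congr rfl fun c0 _ => by rw [hW c0 c]
      _ = (∑ c0 : C i, ρ i c0) * W c := by rw [Finset.sum_mul]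
      _ = W c := by rw [hρ i, one_mul]
  rw [hT c, hsum]

lemma exists_corrEq {I : Type*} [Fintype I] {C : I → Type*} [∀ i, Fintype (C i)]
    [Nonempty I] [∀ i, Nonempty (C i)] (u : ∀ i : I, (∀ j, C j) → ℝ) :
    ∃ π, π ∈ CorrEq u := by
  classical
  have key : ∃ σ ∈ stdSimplex ℝ (∀ j, C j), ∀ p : Σ i : I, C i × C i,
      0 ≤ ∑ s : ∀ j, C j, σ s * uM0 u s p := by
    by_contra hcon
    push_neg at hcon
    obtain ⟨θ, hθmem, hθ⟩ := minimax_alt (fun s p => uM0 u s p) hcon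
    set α : ∀ i : I, C i → C i → ℝ := fun i r t => θ ⟨i, (r, t)⟩ with hα
    set m : ∀ i : I, C i → ℝ := fun i r => ∑ t, α i r t with hm
    have hα0 : ∀ i r t, 0 ≤ α i r t := fun i r t => hθmem.1 _
    have hm0 : ∀ i r, 0 ≤ m i r := fun i r => Finset.sum_nonneg fun t _ => hα0 i r t
    have hm1 : ∀ i r, m i r ≤ 1 := by
      intro i r
      rw [← hθmem.2, hm]
      have hinj : Function.Injective (fun t : C i => (⟨i, (r, t)⟩ : Σ i : I, C i × C i)) := by
        intro t t' htt'
        simpa using htt'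
      calc ∑ t, α i r t
          = ∑ p ∈ Finset.univ.image (fun t : C i => (⟨i, (r, t)⟩ : Σ i : I, C i × C i)), θ p := by
            rw [Finset.sum_image (fun t _ t' _ h => hinj h)]
        _ ≤ ∑ p, θ p := Finset.sum_le_sum_of_subset_of_nonneg (Finset.subset_univ _)
            (fun p _ _ => hθmem.1 p)
    set P : ∀ i : I, C i → C i → ℝ :=
      fun i r t => α i r t + if t = r then 1 - m i r else 0 with hP
    have hPnn : ∀ i r t, 0 ≤ P i r t := by
      intro i r t
      simp only [hP]
      split_ifs with h
      · have := hm1 i r; have := hα0 i r t; linarith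
      · simpa using hα0 i r t
    have hProw : ∀ i r, ∑ t, P i r t = 1 := by
      intro i r
      simp only [hP]
      rw [Finset.sum_add_distrib, Finset.sum_ite_eq' Finset.univ r (fun _ => 1 - m i r)]
      simp [hm]
    have hstat := fun i => exists_stationary (P i) (hPnn i) (hProw i)
    choose ρ hρmem hρstat using hstat
    have hρsum : ∀ i, ∑ c, ρ i c = 1 := fun i => (hρmem i).2
    have hbal : ∀ (i : I) (t : C i), ∑ r, ρ i r * α i r t = ρ i t * m i t := by
      intro i t
      have h1 := hρstat i t
      have h2 : ∑ r, ρ i r * P i r t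
          = (∑ r, ρ i r * α i r t) + ρ i t * (1 - m i t) := by
        simp only [hP, mul_add]
        rw [Finset.sum_add_distrib]
        congr 1
        have he : ∀ r : C i, ρ i r * (if t = r then 1 - m i r else 0)
            = (if t = r then ρ i r * (1 - m i r) else 0) := by
          intro r; split_ifs <;> simp
        rw [Finset.sum_congr rfl fun r _ => he r,
          Finset.sum_ite_eq Finset.univ t (fun r => ρ i r * (1 - m i r))]
        simp
      rw [h2] at h1
      nlinarith [h1]
    set σ : (∀ j, C j) → ℝ := fun s => ∏ i, ρ i (s i) with hσ
    have hσmem : σ ∈ stdSimplex ℝ (∀ j, C j) := by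
      constructor
      · intro s; exact Finset.prod_nonneg fun i _ => (hρmem i).1 (s i)
      · show (∑ s : ∀ j, C j, ∏ i, ρ i (s i)) = 1
        rw [← Fintype.piFinset_univ, ← Finset.prod_univ_sum]
        simp [hρsum]
    set V : ∀ i : I, C i → ℝ := fun i d => ∑ s : ∀ j, C j, σ s * u i (Function.update s i d)
      with hV
    have hD : ∀ (i : I) (r t : C i),
        ∑ s : ∀ j, C j, σ s * uM0 u s ⟨i, (r, t)⟩ = ρ i r * V i r - ρ i r * V i t := by
      intro i r t
      have e1 : ∀ s : ∀ j, C j, σ s * uM0 u s ⟨i, (r, t)⟩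
          = (if s i = r then σ s * u i (Function.update s i r) else 0)
            - (if s i = r then σ s * u i (Function.update s i t) else 0) := by
        intro s
        simp only [uM0]
        by_cases h : s i = r
        · rw [if_pos h.symm, if_pos h, if_pos h, ← h, Function.update_eq_self]
          ring
        · rw [if_neg (fun hh => h hh.symm), if_neg h, if_neg h]; ring
      rw [Finset.sum_congr rfl fun s _ => e1 s, Finset.sum_sub_distrib]
      have hc1 := cond_split ρ hρsum i (fun s => u i (Function.update s i r))
        (fun s e => by simp [Function.update_idem]) r
      have hc2 := cond_split ρ hρsum i (fun s => u i (Function.update s i t))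
        (fun s e => by simp [Function.update_idem]) r
      rw [hc1, hc2]
    have hzero : ∑ p : Σ i : I, C i × C i, θ p * ∑ s : ∀ j, C j, σ s * uM0 u s p = 0 := by
      rw [← Finset.univ_sigma_univ, Finset.sum_sigma]
      refine Finset.sum_eq_zero fun i _ => ?_
      rw [Fintype.sum_prod_type]
      have step1 : ∀ r t : C i, θ ⟨i, (r, t)⟩ * ∑ s : ∀ j, C j, σ s * uM0 u s ⟨i, (r, t)⟩
          = α i r t * (ρ i r * V i r) - α i r t * (ρ i r * V i t) := by
        intro r t
        rw [hD i r t]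
        simp only [hα]
        ring
      rw [Finset.sum_congr rfl fun r _ => Finset.sum_congr rfl fun t _ => step1 r t]
      have hA : ∑ r : C i, ∑ t : C i,
          (α i r t * (ρ i r * V i r) - α i r t * (ρ i r * V i t))
          = (∑ r : C i, m i r * (ρ i r * V i r))
            - ∑ t : C i, (ρ i t * m i t) * V i t := by
        rw [Finset.sum_congr rfl fun r _ => Finset.sum_sub_distrib (fun t => α i r t * (ρ i r * V i r)) (fun t => α i r t * (ρ i r * V i t)), Finset.sum_sub_distrib]
        congr 1
        · refine Finset.sum_congr rfl fun r _ => ?_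
          rw [← Finset.sum_mul]
        · rw [Finset.sum_comm]
          refine Finset.sum_congr rfl fun t _ => ?_
          rw [← hbal i t, Finset.sum_mul]
          refine Finset.sum_congr rfl fun r _ => ?_
          ring
      rw [hA]
      rw [sub_eq_zero]
      refine Finset.sum_congr rfl fun x _ => ?_
      ring
    have hneg : ∑ p : Σ i : I, C i × C i, θ p * ∑ s : ∀ j, C j, σ s * uM0 u s p < 0 := by
      have hfub : ∑ p : Σ i : I, C i × C i, θ p * ∑ s : ∀ j, C j, σ s * uM0 u s p
          = ∑ s : ∀ j, C j, σ s * ∑ p : Σ i : I, C i × C i, θ p * uM0 u s p := by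
        simp only [Finset.mul_sum]
        rw [Finset.sum_comm]
        refine Finset.sum_congr rfl fun s _ => Finset.sum_congr rfl fun p _ => ?_
        ring
      rw [hfub]
      have hex : ∃ s₀ : ∀ j, C j, 0 < σ s₀ := by
        by_contra hno
        push_neg at hno
        have : (∑ s : ∀ j, C j, σ s) ≤ 0 := Finset.sum_nonpos fun s _ => hno s
        rw [hσmem.2] at this
        linarith
      obtain ⟨s₀, hs₀⟩ := hex
      have := Finset.sum_lt_sum
        (f := fun s : ∀ j, C j => σ s * ∑ p : Σ i : I, C i × C i, θ p * uM0 u s p)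
        (g := fun _ => (0:ℝ))
        (fun s _ => mul_nonpos_of_nonneg_of_nonpos (hσmem.1 s) (le_of_lt (hθ s)))
        ⟨s₀, Finset.mem_univ s₀, mul_neg_of_pos_of_neg hs₀ (hθ s₀)⟩
      simpa using this
    linarith [hzero, hneg]
  obtain ⟨σ, hσmem, hσ⟩ := key
  refine ⟨σ, hσmem, ?_⟩
  intro i si ti
  have hkey := hσ ⟨i, (si, ti)⟩
  simp only [uM0] at hkey
  have hterm : ∀ s ∈ (Finset.univ : Finset (∀ j, C j)),
      (if s i = si then (u i (Function.update s i ti) - u i s) * σ s else 0)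
      = -(σ s * (if si = s i then u i s - u i (Function.update s i ti) else 0)) := by
    intro s _
    by_cases h : s i = si
    · rw [if_pos h, if_pos h.symm]; ring
    · rw [if_neg h, if_neg (fun hh => h hh.symm)]; ring
  rw [Finset.sum_congr rfl hterm, Finset.sum_neg_distrib]
  linarith [hkey]

/-- A game with a (finite) symmetry group `G` has a `G`-invariant correlated
equilibrium. -/
theorem invariant_correlated_equilibrium_exists
    {G : Type*} [Group G] [Fintype G]
    {I : Type*} [Fintype I] {C : I → Type*} [∀ i, Fintype (C i)]
    (hI : 2 ≤ Fintype.card I) (hC : ∀ i, 2 ≤ Fintype.card (C i))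
    (u : ∀ i : I, (∀ j, C j) → ℝ) (A : GameAction G C u) :
    ∃ π ∈ CorrEq u, ∀ g : G, (fun s => π (A.actS g s)) = π := by
  classical
  have hIne : Nonempty I := Fintype.card_pos_iff.mp (by omega)
  have hCne : ∀ i, Nonempty (C i) := fun i => Fintype.card_pos_iff.mp (by have := hC i; omega)
  -- basic facts about the action
  have haI_li : ∀ (g : G) (j : I), A.actI g⁻¹ (A.actI g j) = j := by
    intro g j; rw [← A.actI_mul, inv_mul_cancel, A.actI_one]
  have haI_ri : ∀ (g : G) (j : I), A.actI g (A.actI g⁻¹ j) = j := by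
    intro g j; rw [← A.actI_mul, mul_inv_cancel, A.actI_one]
  have haS_li : ∀ (g : G) (s : ∀ j, C j), A.actS g⁻¹ (A.actS g s) = s := by
    intro g s; rw [← A.actS_mul, inv_mul_cancel, A.actS_one]
  have haS_ri : ∀ (g : G) (s : ∀ j, C j), A.actS g (A.actS g⁻¹ s) = s := by
    intro g s; rw [← A.actS_mul, mul_inv_cancel, A.actS_one]
  have hSbij : ∀ g : G, Function.Bijective (A.actS g) := by
    intro g
    constructor
    · intro s s' h
      have := congrArg (A.actS g⁻¹) h
      rwa [haS_li, haS_li] at this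
    · intro s; exact ⟨A.actS g⁻¹ s, haS_ri g s⟩
  have hIinj : ∀ g : G, Function.Injective (A.actI g) := by
    intro g j j' h
    have := congrArg (A.actI g⁻¹) h
    rwa [haI_li, haI_li] at this
  have hIsurj : ∀ g : G, Function.Surjective (A.actI g) :=
    fun g j => ⟨A.actI g⁻¹ j, haI_ri g j⟩
  -- strategy maps
  set s₀ : ∀ j, C j := fun j => Classical.arbitrary (C j) with hs₀
  set φ : ∀ (g : G) (i : I), C i → C (A.actI g i) :=
    fun g i c => A.actS g (Function.update s₀ i c) (A.actI g i) with hφ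
  have hφ_app : ∀ (g : G) (s : ∀ j, C j) (i : I),
      A.actS g s (A.actI g i) = φ g i (s i) := by
    intro g s i
    exact A.diagonal g s (Function.update s₀ i (s i)) i (by simp)
  have hφ_inj : ∀ (g : G) (i : I), Function.Injective (φ g i) := by
    intro g i c c' h
    have hcoord : ∀ j : I, A.actS g (Function.update s₀ i c) (A.actI g j)
        = A.actS g (Function.update s₀ i c') (A.actI g j) := by
      intro j
      by_cases hji : j = i
      · subst hji; exact h
      · exact A.diagonal g _ _ j (by
          rw [Function.update_of_ne hji, Function.update_of_ne hji])
    have heq : A.actS g (Function.update s₀ i c) = A.actS g (Function.update s₀ i c') := by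
      funext j'
      obtain ⟨j, rfl⟩ := hIsurj g j'
      exact hcoord j
    have := (hSbij g).1 heq
    have := congrFun this i
    simpa using this
  have hupd : ∀ (g : G) (s : ∀ j, C j) (i : I) (ti : C i),
      A.actS g (Function.update s i ti)
        = Function.update (A.actS g s) (A.actI g i) (φ g i ti) := by
    intro g s i ti
    funext j'
    obtain ⟨j, rfl⟩ := hIsurj g j'
    by_cases hji : j = i
    · subst hji
      rw [hφ_app, Function.update_self, Function.update_self]
    · have hne : A.actI g j ≠ A.actI g i := fun h => hji (hIinj g h)
      rw [hφ_app, Function.update_of_ne hji, Function.update_of_ne hne, hφ_app]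
  -- get a correlated equilibrium and average it
  obtain ⟨π, hπsimp, hπCE⟩ := exists_corrEq u
  have hπg : ∀ (g : G) (τ : (∀ j, C j) → ℝ), (∑ s : ∀ j, C j, τ (A.actS g s)) = ∑ s, τ s :=
    fun g τ => Fintype.sum_bijective (A.actS g) (hSbij g) _ _ (fun s => rfl)
  set cardG : ℝ := (Fintype.card G : ℝ) with hcardG
  have hcardG0 : 0 < cardG := by
    have := Fintype.card_pos (α := G); rw [hcardG]; positivity
  set pibar : (∀ j, C j) → ℝ := fun s => (∑ g : G, π (A.actS g s)) / cardG with hpibar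
  have hmem : pibar ∈ stdSimplex ℝ (∀ j, C j) := by
    constructor
    · intro s
      apply div_nonneg _ hcardG0.le
      exact Finset.sum_nonneg fun g _ => hπsimp.1 _
    · show (∑ s : ∀ j, C j, (∑ g : G, π (A.actS g s)) / cardG) = 1
      rw [← Finset.sum_div, Finset.sum_comm]
      have : ∀ g : G, (∑ s : ∀ j, C j, π (A.actS g s)) = 1 := by
        intro g; rw [hπg g π, hπsimp.2]
      rw [Finset.sum_congr rfl fun g _ => this g]
      simp [hcardG]
  -- each translate satisfies the CE inequalities
  have hT : ∀ (g : G) (i : I) (si ti : C i),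
      ∑ s : ∀ j, C j, (if s i = si then
        (u i (Function.update s i ti) - u i s) * π (A.actS g s) else 0) ≤ 0 := by
    intro g i si ti
    have hre : ∀ s : ∀ j, C j,
        (if s i = si then (u i (Function.update s i ti) - u i s) * π (A.actS g s) else 0)
        = (if (A.actS g s) (A.actI g i) = φ g i si then
            (u (A.actI g i) (Function.update (A.actS g s) (A.actI g i) (φ g i ti))
              - u (A.actI g i) (A.actS g s)) * π (A.actS g s) else 0) := by
      intro s
      have hcond : ((A.actS g s) (A.actI g i) = φ g i si) ↔ (s i = si) := by
        rw [hφ_app]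
        exact ⟨fun h => hφ_inj g i h, fun h => by rw [h]⟩
      by_cases h : s i = si
      · rw [if_pos h, if_pos (hcond.mpr h)]
        rw [← hupd, A.utility_inv, A.utility_inv]
      · rw [if_neg h, if_neg (fun hh => h (hcond.mp hh))]
    rw [Finset.sum_congr rfl fun s _ => hre s]
    calc ∑ s : ∀ j, C j, (if (A.actS g s) (A.actI g i) = φ g i si then
            (u (A.actI g i) (Function.update (A.actS g s) (A.actI g i) (φ g i ti))
              - u (A.actI g i) (A.actS g s)) * π (A.actS g s) else 0)
        = ∑ s : ∀ j, C j, (if s (A.actI g i) = φ g i si then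
            (u (A.actI g i) (Function.update s (A.actI g i) (φ g i ti))
              - u (A.actI g i) s) * π s else 0) :=
          Fintype.sum_bijective (A.actS g) (hSbij g) _ _ (fun s => rfl)
      _ ≤ 0 := hπCE (A.actI g i) (φ g i si) (φ g i ti)
  refine ⟨pibar, ⟨hmem, ?_⟩, ?_⟩
  · intro i si ti
    have hexp : ∀ s : ∀ j, C j,
        (if s i = si then (u i (Function.update s i ti) - u i s) * pibar s else 0)
        = (∑ g : G, (if s i = si then
            (u i (Function.update s i ti) - u i s) * π (A.actS g s) else 0)) / cardG := by
      intro s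
      by_cases h : s i = si
      · simp only [if_pos h, hpibar]
        rw [← Finset.mul_sum, mul_div_assoc]
      · simp only [if_neg h]
        simp
    rw [Finset.sum_congr rfl fun s _ => hexp s, ← Finset.sum_div, Finset.sum_comm]
    apply div_nonpos_of_nonpos_of_nonneg _ hcardG0.le
    exact Finset.sum_nonpos fun g _ => hT g i si ti
  · intro g
    funext s
    show (∑ h : G, π (A.actS h (A.actS g s))) / cardG = pibar s
    have : ∀ h : G, π (A.actS h (A.actS g s)) = π (A.actS (h * g) s) := by
      intro h; rw [A.actS_mul]
    rw [Finset.sum_congr rfl fun h _ => this h]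
    have hbij : Function.Bijective (fun h : G => h * g) :=
      (Equiv.mulRight g).bijective
    rw [Fintype.sum_bijective _ hbij (fun h => π (A.actS (h * g) s))
      (fun h => π (A.actS h s)) (fun h => rfl)]
end

section
/- If a finite group G acts on the finite game Γ, then the set Δ_G^Π(Γ) of G-invariant product distributions is good in the zero-sum game Γ^0. -/
open Finset
open scoped Classical BigOperators
open Filter
open scoped Topology

theorem simplex_coord_le_one {A : Type*} [Fintype A] {f : A → ℝ}
    (hf : f ∈ stdSimplex ℝ A) (a : A) : f a ≤ 1 := by
  rw [← hf.2]
  exact Finset.single_le_sum (fun x _ => hf.1 x) (Finset.mem_univ a)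

theorem stationary_exists {A : Type*} [Fintype A] [Nonempty A] (P : A → A → ℝ)
    (hP : ∀ a, P a ∈ stdSimplex ℝ A) :
    ∃ ρ ∈ stdSimplex ℝ A, ∀ t, ∑ r, ρ r * P r t = ρ t := by
  set T : (A → ℝ) → (A → ℝ) := fun ρ t => ∑ r, ρ r * P r t with hT
  have hTmem : ∀ ρ ∈ stdSimplex ℝ A, T ρ ∈ stdSimplex ℝ A := by
    intro ρ hρ
    refine ⟨fun t => Finset.sum_nonneg fun r _ => mul_nonneg (hρ.1 r) ((hP r).1 t), ?_⟩
    rw [show ∑ t, T ρ t = ∑ r, ∑ t, ρ r * P r t from Finset.sum_comm]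
    calc ∑ r, ∑ t, ρ r * P r t = ∑ r, ρ r * ∑ t, P r t := by
          simp [Finset.mul_sum]
      _ = 1 := by
          simp only [fun r => (hP r).2, mul_one]; exact hρ.2
  set ρ0 : A → ℝ := fun _ => (Fintype.card A : ℝ)⁻¹ with hρ0
  have hρ0mem : ρ0 ∈ stdSimplex ℝ A := by
    constructor
    · intro x; positivity
    · simp [hρ0, Finset.card_univ, mul_inv_cancel₀ (by positivity : (Fintype.card A : ℝ) ≠ 0)]
  set q : ℕ → A → ℝ := fun n => T^[n] ρ0 with hq
  have hqmem : ∀ n, q n ∈ stdSimplex ℝ A := by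
    intro n; induction n with
    | zero => exact hρ0mem
    | succ n ih =>
      have : q (n+1) = T (q n) := by
        simp only [hq]; rw [Function.iterate_succ_apply']
      rw [this]; exact hTmem _ ih
  have hqT : ∀ n, T (q n) = q (n + 1) := by
    intro n; simp only [hq]; rw [Function.iterate_succ_apply']
  set c : ℕ → A → ℝ := fun n t => (∑ k ∈ Finset.range (n + 1), q k t) / (n + 1) with hc
  have hcmem : ∀ n, c n ∈ stdSimplex ℝ A := by
    intro n
    constructor
    · intro t
      apply div_nonneg (Finset.sum_nonneg fun k _ => (hqmem k).1 t) (by positivity)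
    · have h1 : ∑ t, c n t = (∑ k ∈ Finset.range (n+1), ∑ t, q k t) / (n+1) := by
        simp only [hc]; rw [← Finset.sum_div, Finset.sum_comm]
      rw [h1]
      simp only [fun k => (hqmem k).2, Finset.sum_const, Finset.card_range, nsmul_eq_mul, mul_one]
      push_cast
      field_simp
  obtain ⟨ρ, hρmem, φ, hφ, hlim⟩ := (isCompact_stdSimplex ℝ A).tendsto_subseq hcmem
  refine ⟨ρ, hρmem, fun t => ?_⟩
  have key : ∀ n, T (c n) t = c n t + (q (n + 1) t - q 0 t) / (n + 1) := by
    intro n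
    have h1 : T (c n) t = (∑ k ∈ Finset.range (n+1), T (q k) t) / (n + 1) := by
      simp only [hT, hc]
      calc ∑ r, (∑ k ∈ Finset.range (n+1), q k r)/((n:ℝ)+1) * P r t
          = ∑ r, (∑ k ∈ Finset.range (n+1), q k r * P r t)/((n:ℝ)+1) := by
            refine Finset.sum_congr rfl fun r _ => ?_
            rw [div_mul_eq_mul_div, Finset.sum_mul]
        _ = (∑ r, ∑ k ∈ Finset.range (n+1), q k r * P r t)/((n:ℝ)+1) := by
            rw [Finset.sum_div]
        _ = (∑ k ∈ Finset.range (n+1), ∑ r, q k r * P r t)/((n:ℝ)+1) := by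
            rw [Finset.sum_comm]
    rw [h1]
    simp only [fun k => congrFun (hqT k) t]
    have h3 : ∑ k ∈ Finset.range (n+1), q (k+1) t
        = (∑ k ∈ Finset.range (n+1), q k t) + (q (n + 1) t - q 0 t) := by
      have e1 := Finset.sum_range_succ' (fun k => q k t) (n+1)
      rw [Finset.sum_range_succ (fun k => q k t) (n+1)] at e1
      linarith
    rw [h3, hc]; ring
  have herr : Tendsto (fun n : ℕ => (q (n + 1) t - q 0 t) / ((n:ℝ) + 1)) atTop (𝓝 0) := by
    apply squeeze_zero_norm (a := fun n : ℕ => 2 / ((n:ℝ) + 1))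
    · intro n
      rw [Real.norm_eq_abs, abs_div, abs_of_nonneg (by positivity : (0:ℝ) ≤ (n:ℝ) + 1)]
      apply div_le_div_of_nonneg_right ?_ (by positivity)
      have h1 : |q (n+1) t| ≤ 1 := by
        rw [abs_of_nonneg ((hqmem (n+1)).1 t)]; exact simplex_coord_le_one (hqmem (n+1)) t
      have h2 : |q 0 t| ≤ 1 := by
        rw [abs_of_nonneg ((hqmem 0).1 t)]; exact simplex_coord_le_one (hqmem 0) t
      calc |q (n+1) t - q 0 t| ≤ |q (n+1) t| + |q 0 t| := abs_sub _ _
        _ ≤ 2 := by linarith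
    · have := tendsto_one_div_add_atTop_nhds_zero_nat (𝕜 := ℝ)
      have h2 : Tendsto (fun n : ℕ => 2 * (1 / ((n:ℝ) + 1))) atTop (𝓝 (2 * 0)) :=
        this.const_mul 2
      simpa [div_eq_mul_inv] using h2
  -- limits
  have hφtop : Tendsto φ atTop atTop := hφ.tendsto_atTop
  have hlim_t : Tendsto (fun n => c (φ n) t) atTop (𝓝 (ρ t)) := by
    have := tendsto_pi_nhds.mp hlim t
    exact this
  have hTcont : Continuous fun f : A → ℝ => T f t := by
    simp only [hT]
    exact continuous_finset_sum _ fun r _ => ((continuous_apply r).mul continuous_const)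
  have hlim1 : Tendsto (fun n => T (c (φ n)) t) atTop (𝓝 (T ρ t)) :=
    (hTcont.tendsto ρ).comp hlim
  have hlim2 : Tendsto (fun n => T (c (φ n)) t) atTop (𝓝 (ρ t)) := by
    have : (fun n => T (c (φ n)) t)
        = fun n => c (φ n) t + (q (φ n + 1) t - q 0 t) / ((φ n : ℝ) + 1) := by
      funext n; exact key (φ n)
    rw [this]
    have herr' : Tendsto (fun n => (q (φ n + 1) t - q 0 t) / ((φ n : ℝ) + 1)) atTop (𝓝 0) :=
      herr.comp hφtop
    simpa using hlim_t.add herr'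
  exact tendsto_nhds_unique hlim1 hlim2

theorem single_mem_simplex {B : Type*} [Fintype B] (b0 : B) :
    (fun b => if b = b0 then (1:ℝ) else 0) ∈ stdSimplex ℝ B := by
  constructor
  · intro b; dsimp only; split <;> norm_num
  · simp

theorem expPay_bddBelow {A B : Type*} [Fintype A] [Fintype B] (u : A → B → ℝ)
    {σ : A → ℝ} (hσ : σ ∈ stdSimplex ℝ A) {θ : B → ℝ} (hθ : θ ∈ stdSimplex ℝ B) :
    -(∑ a, ∑ b, |u a b|) ≤ expPay u σ θ := by
  rw [expPay, neg_le, ← Finset.sum_neg_distrib]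
  apply Finset.sum_le_sum
  intro a _
  rw [← Finset.sum_neg_distrib]
  apply Finset.sum_le_sum
  intro b _
  have h1 : σ a * θ b ≤ 1 := mul_le_one₀ (simplex_coord_le_one hσ a) (hθ.1 b) (simplex_coord_le_one hθ b)
  have h2 : 0 ≤ σ a * θ b := mul_nonneg (hσ.1 a) (hθ.1 b)
  nlinarith [neg_abs_le (u a b), abs_nonneg (u a b)]

theorem gameValue_le_zero {A B : Type*} [Fintype A] [Fintype B] [Nonempty A] [Nonempty B]
    (u : A → B → ℝ) (b0 : B) (h : ∀ a, u a b0 = 0) : gameValue u ≤ 0 := by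
  have hne : Nonempty (stdSimplex ℝ A) := by
    obtain ⟨a0⟩ := ‹Nonempty A›
    exact ⟨⟨_, single_mem_simplex a0⟩⟩
  rw [gameValue]
  apply ciSup_le
  intro σ
  have hbdd : BddBelow (Set.range fun θ : stdSimplex ℝ B => expPay u σ.1 θ.1) := by
    refine ⟨-(∑ a, ∑ b, |u a b|), ?_⟩
    rintro x ⟨θ, rfl⟩
    exact expPay_bddBelow u σ.2 θ.2
  have hle := ciInf_le hbdd (⟨_, single_mem_simplex b0⟩ : stdSimplex ℝ B)
  refine hle.trans ?_
  rw [expPay]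
  apply le_of_eq
  apply Finset.sum_eq_zero
  intro a _
  apply Finset.sum_eq_zero
  intro b _
  by_cases hb : b = b0
  · subst hb; rw [h a]; ring
  · simp [hb]

section Act
variable {G : Type*} [Group G] {I : Type*} {C : I → Type*}
  {u : ∀ i : I, (∀ j, C j) → ℝ} (A : GameAction G C u)
variable (s0 : ∀ j, C j)

/-- The induced action on individual strategies. -/
noncomputable def GameAction.act (g : G) (i : I) (c : C i) : C (A.actI g i) :=
  A.actS g (Function.update s0 i c) (A.actI g i)

theorem GameAction.star (g : G) (s : ∀ j, C j) (i : I) :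
    A.actS g s (A.actI g i) = A.act s0 g i (s i) :=
  A.diagonal g s (Function.update s0 i (s i)) i (by simp)

theorem GameAction.actI_inv (g : G) (i : I) : A.actI g⁻¹ (A.actI g i) = i := by
  rw [← A.actI_mul, inv_mul_cancel, A.actI_one]

theorem GameAction.actI_inv' (g : G) (i : I) : A.actI g (A.actI g⁻¹ i) = i := by
  rw [← A.actI_mul, mul_inv_cancel, A.actI_one]

theorem GameAction.actS_inv (g : G) (s : ∀ j, C j) : A.actS g⁻¹ (A.actS g s) = s := by
  rw [← A.actS_mul, inv_mul_cancel, A.actS_one]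

theorem GameAction.actI_bijective (g : G) : Function.Bijective (A.actI g) := by
  have h1 : Function.LeftInverse (A.actI g⁻¹) (A.actI g) := fun i => A.actI_inv g i
  have h2 : Function.RightInverse (A.actI g⁻¹) (A.actI g) := fun i => A.actI_inv' g i
  exact ⟨h1.injective, h2.surjective⟩

theorem GameAction.actS_bijective (g : G) : Function.Bijective (A.actS g) := by
  have h1 : Function.LeftInverse (A.actS g⁻¹) (A.actS g) := fun s => A.actS_inv g s
  have h2 : Function.RightInverse (A.actS g⁻¹) (A.actS g) := fun s => by
    have := A.actS_inv g⁻¹ s; rwa [inv_inv] at this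
  exact ⟨h1.injective, h2.surjective⟩

theorem GameAction.act_injective (g : G) (i : I) :
    Function.Injective (A.act s0 g i) := by
  intro r r' hrr'
  have h := A.diagonal g⁻¹ (A.actS g (Function.update s0 i r))
    (A.actS g (Function.update s0 i r')) (A.actI g i) hrr'
  rw [A.actS_inv, A.actS_inv, A.actI_inv] at h
  simpa using h

theorem GameAction.card_eq [∀ i, Fintype (C i)] (s0 : ∀ j, C j) (g : G) (i : I) :
    Fintype.card (C i) = Fintype.card (C (A.actI g i)) := by
  refine le_antisymm (Fintype.card_le_of_injective _ (A.act_injective s0 g i)) ?_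
  have h1 := Fintype.card_le_of_injective _ (A.act_injective s0 g⁻¹ (A.actI g i))
  have h2 : Fintype.card (C (A.actI g⁻¹ (A.actI g i))) = Fintype.card (C i) := by
    rw [A.actI_inv]
  omega

theorem GameAction.act_bijective [∀ i, Fintype (C i)] (g : G) (i : I) :
    Function.Bijective (A.act s0 g i) :=
  (Fintype.bijective_iff_injective_and_card _).2
    ⟨A.act_injective s0 g i, A.card_eq s0 g i⟩

-- HEq helpers
theorem heq_pi {J : Type*} {C : J → Type*} {j i : J} (e : j = i) (f : ∀ k, C k) :
    HEq (f j) (f i) := by subst e; rfl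

theorem apply2_congr {J : Type*} {C : J → Type*} {D : Type*} {j i : J} (e : j = i)
    {x : C j} {y : C i} (hxy : HEq x y) (F : ∀ k, C k → D) : F j x = F i y := by
  subst e; rw [eq_of_heq hxy]

theorem pair_heq {J : Type*} {C : J → Type*} {j i : J} (e : j = i)
    {a b : C j} {a' b' : C i} (ha : HEq a a') (hb : HEq b b') :
    HEq ((a, b) : C j × C j) ((a', b') : C i × C i) := by
  subst e; rw [eq_of_heq ha, eq_of_heq hb]

theorem GameAction.act_one_heq (i : I) (c : C i) : HEq (A.act s0 1 i c) c := by
  have h1 : A.act s0 1 i c = Function.update s0 i c (A.actI 1 i) := by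
    rw [GameAction.act, A.actS_one]
  rw [h1]
  refine HEq.trans (heq_pi (A.actI_one i) (Function.update s0 i c)) ?_
  rw [Function.update_self]

theorem GameAction.act_mul_heq (g h : G) (i : I) (c : C i) :
    HEq (A.act s0 (g * h) i c) (A.act s0 g (A.actI h i) (A.act s0 h i c)) := by
  have h1 : A.act s0 (g * h) i c
      = (A.actS g (A.actS h (Function.update s0 i c))) (A.actI (g * h) i) := by
    rw [GameAction.act, A.actS_mul]
  have h2 : HEq ((A.actS g (A.actS h (Function.update s0 i c))) (A.actI (g * h) i))
      ((A.actS g (A.actS h (Function.update s0 i c))) (A.actI g (A.actI h i))) :=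
    heq_pi (A.actI_mul g h i) _
  have h3 : (A.actS g (A.actS h (Function.update s0 i c))) (A.actI g (A.actI h i))
      = A.act s0 g (A.actI h i) (A.act s0 h i c) := by
    rw [A.star s0 g (A.actS h (Function.update s0 i c)) (A.actI h i)]
    rfl
  rw [h1]
  exact h2.trans (heq_of_eq h3)
end Act

section Act2
variable {G : Type*} [Group G] {I : Type*} {C : I → Type*}
  {u : ∀ i : I, (∀ j, C j) → ℝ} (A : GameAction G C u)
variable (s0 : ∀ j, C j)

/-- The induced action on the minimizer's strategies in `Γ⁰`. -/
noncomputable def GameAction.actB (g : G) (p : Σ i : I, C i × C i) : Σ i : I, C i × C i :=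
  ⟨A.actI g p.1, (A.act s0 g p.1 p.2.1, A.act s0 g p.1 p.2.2)⟩

theorem GameAction.actB_one (p : Σ i : I, C i × C i) : A.actB s0 1 p = p := by
  obtain ⟨i, r, t⟩ := p
  exact Sigma.ext (A.actI_one i)
    (pair_heq (A.actI_one i) (A.act_one_heq s0 i r) (A.act_one_heq s0 i t))

theorem GameAction.actB_mul (g h : G) (p : Σ i : I, C i × C i) :
    A.actB s0 (g * h) p = A.actB s0 g (A.actB s0 h p) := by
  obtain ⟨i, r, t⟩ := p
  exact Sigma.ext (A.actI_mul g h i)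
    (pair_heq (A.actI_mul g h i) (A.act_mul_heq s0 g h i r) (A.act_mul_heq s0 g h i t))

theorem GameAction.actB_bijective (g : G) : Function.Bijective (A.actB s0 g) := by
  have h1 : Function.LeftInverse (A.actB s0 g⁻¹) (A.actB s0 g) := fun p => by
    rw [← A.actB_mul, inv_mul_cancel, A.actB_one]
  have h2 : Function.RightInverse (A.actB s0 g⁻¹) (A.actB s0 g) := fun p => by
    rw [← A.actB_mul, mul_inv_cancel, A.actB_one]
  exact ⟨h1.injective, h2.surjective⟩

theorem GameAction.update_act (g : G) (s : ∀ j, C j) (i : I) (t : C i) :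
    Function.update (A.actS g s) (A.actI g i) (A.act s0 g i t)
      = A.actS g (Function.update s i t) := by
  funext j'
  obtain ⟨j, rfl⟩ := (A.actI_bijective g).surjective j'
  by_cases hj : j = i
  · subst hj
    rw [Function.update_self, A.star s0 g (Function.update s j t) j, Function.update_self]
  · have hne : A.actI g j ≠ A.actI g i := fun hcon => hj ((A.actI_bijective g).injective hcon)
    rw [Function.update_of_ne hne]
    exact A.diagonal g s (Function.update s i t) j (Function.update_of_ne hj t s).symm

theorem uM0_equivariant [Fintype I] [∀ i, Fintype (C i)] (g : G) (s : ∀ j, C j)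
    (p : Σ i : I, C i × C i) :
    uM0 u (A.actS g s) (A.actB s0 g p) = uM0 u s p := by
  obtain ⟨i, r, t⟩ := p
  have hcond : (A.act s0 g i r = A.act s0 g i (s i)) ↔ (r = s i) :=
    (A.act_injective s0 g i).eq_iff
  simp only [uM0, GameAction.actB, A.star s0 g s i]
  by_cases hr : r = s i
  · rw [if_pos (hcond.2 hr), if_pos hr, A.update_act s0 g s i t, A.utility_inv, A.utility_inv]
  · rw [if_neg (fun hc => hr (hcond.1 hc)), if_neg hr]
end Act2

theorem prod_slice {I : Type*} [Fintype I] {C : I → Type*} [∀ i, Fintype (C i)]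
    (ρ : ∀ i, C i → ℝ) (hρ : ∀ i, ρ i ∈ stdSimplex ℝ (C i)) (i : I) (r c : C i)
    (F : (∀ j, C j) → ℝ) :
    ∑ s : ∀ j, C j, (if s i = r then (∏ j, ρ j (s j)) * F (Function.update s i c) else 0)
      = ρ i r * ∑ s : ∀ j, C j, (∏ j, ρ j (s j)) * F (Function.update s i c) := by
  set e := Equiv.piSplitAt i C with he
  set Q : (∀ j : {j // j ≠ i}, C j) → ℝ := fun y => ∏ j : {j // j ≠ i}, ρ j (y j) with hQ
  have he_app : ∀ (a : C i) (y : ∀ j : {j // j ≠ i}, C j) (j : I) (hj : j ≠ i),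
      e.symm (a, y) j = y ⟨j, hj⟩ := by
    intro a y j hj; simp [he, Equiv.piSplitAt, hj]
  have he_i : ∀ (a : C i) (y : ∀ j : {j // j ≠ i}, C j), e.symm (a, y) i = a := by
    intro a y; simp [he, Equiv.piSplitAt]
  have hupd : ∀ (a : C i) (y : ∀ j : {j // j ≠ i}, C j),
      Function.update (e.symm (a, y)) i c = e.symm (c, y) := by
    intro a y; funext j
    by_cases hj : j = i
    · subst hj; rw [Function.update_self, he_i]
    · rw [Function.update_of_ne hj, he_app a y j hj, he_app c y j hj]
  have hprod : ∀ (a : C i) (y : ∀ j : {j // j ≠ i}, C j),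
      (∏ j, ρ j (e.symm (a, y) j)) = ρ i a * Q y := by
    intro a y
    rw [← Finset.mul_prod_erase Finset.univ (fun j => ρ j (e.symm (a, y) j))
      (Finset.mem_univ i), he_i]
    congr 1
    rw [Finset.prod_subtype (p := fun j => j ≠ i) (Finset.univ.erase i)
      (fun j => by simp [Finset.mem_erase]) (fun j => ρ j (e.symm (a, y) j))]
    exact Finset.prod_congr rfl fun j _ => by rw [he_app a y j.1 j.2]
  have hsplit : ∀ (H : (∀ j, C j) → ℝ),
      ∑ s : ∀ j, C j, H s = ∑ a : C i, ∑ y : ∀ j : {j // j ≠ i}, C j, H (e.symm (a, y)) := by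
    intro H
    rw [← Equiv.sum_comp e.symm H, Fintype.sum_prod_type]
  rw [hsplit, hsplit (fun s => (∏ j, ρ j (s j)) * F (Function.update s i c))]
  simp only [he_i, hupd, hprod]
  have hL : ∀ a : C i, (∑ y : ∀ j : {j // j ≠ i}, C j,
      if a = r then (ρ i a * Q y) * F (e.symm (c, y)) else 0)
      = if a = r then ρ i a * ∑ y, Q y * F (e.symm (c, y)) else 0 := by
    intro a
    by_cases ha : a = r
    · simp only [ha, if_true, Finset.mul_sum]; exact Finset.sum_congr rfl fun y _ => by ring
    · simp [ha]
  simp only [hL]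
  rw [Finset.sum_ite_eq' Finset.univ r (fun a => ρ i a * ∑ y, Q y * F (e.symm (c, y)))]
  simp only [Finset.mem_univ, if_true]
  have hR : ∑ a : C i, ∑ y : ∀ j : {j // j ≠ i}, C j, (ρ i a * Q y) * F (e.symm (c, y))
      = ∑ y : ∀ j : {j // j ≠ i}, C j, Q y * F (e.symm (c, y)) := by
    calc ∑ a : C i, ∑ y : ∀ j : {j // j ≠ i}, C j, (ρ i a * Q y) * F (e.symm (c, y))
        = ∑ a : C i, ρ i a * ∑ y, Q y * F (e.symm (c, y)) := Finset.sum_congr rfl fun a _ => by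
          rw [Finset.mul_sum]; exact Finset.sum_congr rfl fun y _ => by ring
      _ = (∑ a : C i, ρ i a) * ∑ y, Q y * F (e.symm (c, y)) := (Finset.sum_mul _ _ _).symm
      _ = _ := by rw [(hρ i).2, one_mul]
  rw [hR]


/-- If a finite group `G` acts on the game `Γ`, then the set `Δ_G^Π(Γ)` of `G`-invariant
product distributions is good in the zero-sum game `Γ⁰`. -/
theorem invariant_products_good
    {G : Type*} [Group G] [Fintype G]
    {I : Type*} [Fintype I] {C : I → Type*} [∀ i, Fintype (C i)]
    (hI : 2 ≤ Fintype.card I) (hC : ∀ i, 2 ≤ Fintype.card (C i))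
    (u : ∀ i : I, (∀ j, C j) → ℝ) (A : GameAction G C u) :
    IsGood (uM0 u)
      {π | π ∈ prodDists C ∧ ∀ g : G, (fun s => π (A.actS g s)) = π} := by

  classical
  haveI hInonempty : Nonempty I := Fintype.card_pos_iff.mp (by omega)
  haveI hCnonempty : ∀ i, Nonempty (C i) := fun i =>
    Fintype.card_pos_iff.mp (by have := hC i; omega)
  haveI : Nonempty (∀ j, C j) := ⟨fun j => Classical.arbitrary (C j)⟩
  haveI : Nonempty (Σ i : I, C i × C i) :=
    ⟨⟨Classical.arbitrary I, Classical.arbitrary _, Classical.arbitrary _⟩⟩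
  set s0 : ∀ j, C j := Classical.arbitrary _ with hs0
  set N : ℝ := (Fintype.card G : ℝ) with hN
  have hNpos : 0 < N := by
    rw [hN]; exact_mod_cast Fintype.card_pos
  intro θ hθ
  -- the symmetrization of θ
  set θb : (Σ i : I, C i × C i) → ℝ := fun p => (∑ g : G, θ (A.actB s0 g p)) / N with hθb
  have hθbinv : ∀ (g : G) (p), θb (A.actB s0 g p) = θb p := by
    intro g p
    simp only [hθb]
    congr 1
    refine Fintype.sum_equiv (Equiv.mulRight g) _ _ ?_
    intro h
    simp only [Equiv.coe_mulRight]
    rw [A.actB_mul s0 h g p]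
  have hθbmem : θb ∈ stdSimplex ℝ (Σ i : I, C i × C i) := by
    constructor
    · intro p
      apply div_nonneg (Finset.sum_nonneg fun g _ => hθ.1 _) hNpos.le
    · have h1 : ∑ p, θb p = (∑ g : G, ∑ p, θ (A.actB s0 g p)) / N := by
        simp only [hθb]
        rw [← Finset.sum_div, Finset.sum_comm]
      rw [h1]
      have h2 : ∀ g : G, ∑ p, θ (A.actB s0 g p) = 1 := by
        intro g
        rw [(A.actB_bijective s0 g).sum_comp θ]
        exact hθ.2
      simp only [h2, Finset.sum_const, Finset.card_univ, nsmul_eq_mul, mul_one]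
      rw [← hN, div_self hNpos.ne']
  -- transition matrices
  set w : ∀ i : I, C i → C i → ℝ := fun i r t => θb ⟨i, (r, t)⟩ with hw
  set z : ∀ i : I, C i → ℝ := fun i r => ∑ t, w i r t with hz
  have hwnn : ∀ i r t, 0 ≤ w i r t := fun i r t => hθbmem.1 _
  have hznn : ∀ i r, 0 ≤ z i r := fun i r => Finset.sum_nonneg fun t _ => hwnn i r t
  have hzle : ∀ i r, z i r ≤ 1 := by
    intro i r
    have htot : ∑ p : Σ i' : I, C i' × C i', θb p
        = ∑ i', ∑ q : C i' × C i', θb ⟨i', q⟩ := by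
      rw [← Finset.univ_sigma_univ, Finset.sum_sigma]
    have h2 : z i r ≤ ∑ q : C i × C i, θb ⟨i, q⟩ := by
      rw [Fintype.sum_prod_type]
      exact Finset.single_le_sum (f := fun r' => ∑ t, θb ⟨i, (r', t)⟩)
        (fun r' _ => Finset.sum_nonneg fun t _ => hθbmem.1 _) (Finset.mem_univ r)
    have h1 : z i r ≤ ∑ i', ∑ q : C i' × C i', θb ⟨i', q⟩ :=
      h2.trans (Finset.single_le_sum (f := fun i' => ∑ q : C i' × C i', θb ⟨i', q⟩)
        (fun i' _ => Finset.sum_nonneg fun q _ => hθbmem.1 _) (Finset.mem_univ i))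
    exact h1.trans (le_of_eq (htot.symm.trans hθbmem.2))
  -- the stochastic matrices
  set P : ∀ i : I, C i → C i → ℝ :=
    fun i r t => w i r t + (if t = r then 1 - z i r else 0) with hP
  have hPmem : ∀ (i : I) (r : C i), P i r ∈ stdSimplex ℝ (C i) := by
    intro i r
    constructor
    · intro t
      by_cases ht : t = r
      · subst ht
        have h1 := hzle i t
        have h2 := hwnn i t t
        show (0:ℝ) ≤ w i t t + if t = t then 1 - z i t else 0
        rw [if_pos rfl]
        linarith
      · simp only [hP, if_neg ht, add_zero]
        exact hwnn i r t
    · simp only [hP]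
      rw [Finset.sum_add_distrib]
      rw [Finset.sum_ite_eq' Finset.univ r (fun _ => 1 - z i r)]
      simp only [Finset.mem_univ, if_true]
      have : ∑ t, w i r t = z i r := rfl
      rw [this]; ring
  -- stationary distributions
  have hstat : ∀ i : I, ∃ ρ ∈ stdSimplex ℝ (C i), ∀ t, ∑ r, ρ r * P i r t = ρ t :=
    fun i => stationary_exists (P i) (hPmem i)
  choose ρ1 hρ1mem hρ1stat using hstat
  -- equivariance of w, z, P
  have hw_inv : ∀ (g : G) (i : I) (r t : C i),
      w (A.actI g i) (A.act s0 g i r) (A.act s0 g i t) = w i r t := by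
    intro g i r t
    have := hθbinv g ⟨i, (r, t)⟩
    exact this
  have hz_inv : ∀ (g : G) (i : I) (r : C i),
      z (A.actI g i) (A.act s0 g i r) = z i r := by
    intro g i r
    have h1 : ∀ t : C i, w (A.actI g i) (A.act s0 g i r) (A.act s0 g i t) = w i r t :=
      hw_inv g i r
    calc z (A.actI g i) (A.act s0 g i r)
        = ∑ t' : C (A.actI g i), w (A.actI g i) (A.act s0 g i r) t' := rfl
      _ = ∑ t : C i, w (A.actI g i) (A.act s0 g i r) (A.act s0 g i t) :=
          ((A.act_bijective s0 g i).sum_comp _).symm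
      _ = ∑ t : C i, w i r t := Finset.sum_congr rfl fun t _ => h1 t
      _ = z i r := rfl
  have hP_inv : ∀ (g : G) (i : I) (r t : C i),
      P (A.actI g i) (A.act s0 g i r) (A.act s0 g i t) = P i r t := by
    intro g i r t
    have hiff : (A.act s0 g i t = A.act s0 g i r) ↔ (t = r) :=
      (A.act_injective s0 g i).eq_iff
    simp only [hP, hw_inv g i r t, hz_inv g i r]
    by_cases ht : t = r
    · rw [if_pos (hiff.2 ht), if_pos ht]
    · rw [if_neg (fun hc => ht (hiff.1 hc)), if_neg ht]
  -- invariant stationary distributions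
  set ρ : ∀ i : I, C i → ℝ :=
    fun i c => (∑ g : G, ρ1 (A.actI g⁻¹ i) (A.act s0 g⁻¹ i c)) / N with hρ
  have hρmem : ∀ i, ρ i ∈ stdSimplex ℝ (C i) := by
    intro i
    constructor
    · intro c
      apply div_nonneg (Finset.sum_nonneg fun g _ => (hρ1mem _).1 _) hNpos.le
    · have h1 : ∑ c, ρ i c
          = (∑ g : G, ∑ c, ρ1 (A.actI g⁻¹ i) (A.act s0 g⁻¹ i c)) / N := by
        simp only [hρ]
        rw [← Finset.sum_div, Finset.sum_comm]
      rw [h1]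
      have h2 : ∀ g : G, ∑ c, ρ1 (A.actI g⁻¹ i) (A.act s0 g⁻¹ i c) = 1 := fun g => by
        rw [(A.act_bijective s0 g⁻¹ i).sum_comp _]
        exact (hρ1mem _).2
      simp only [h2, Finset.sum_const, Finset.card_univ, nsmul_eq_mul, mul_one]
      rw [← hN, div_self hNpos.ne']
  have hρstat : ∀ (i : I) (t : C i), ∑ r, ρ i r * P i r t = ρ i t := by
    intro i t
    have hpull : ∀ g : G, ∑ r, ρ1 (A.actI g⁻¹ i) (A.act s0 g⁻¹ i r) * P i r t
        = ρ1 (A.actI g⁻¹ i) (A.act s0 g⁻¹ i t) := by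
      intro g
      have h1 : ∀ r, P i r t
          = P (A.actI g⁻¹ i) (A.act s0 g⁻¹ i r) (A.act s0 g⁻¹ i t) :=
        fun r => (hP_inv g⁻¹ i r t).symm
      calc ∑ r, ρ1 (A.actI g⁻¹ i) (A.act s0 g⁻¹ i r) * P i r t
          = ∑ r, ρ1 (A.actI g⁻¹ i) (A.act s0 g⁻¹ i r)
              * P (A.actI g⁻¹ i) (A.act s0 g⁻¹ i r) (A.act s0 g⁻¹ i t) :=
            Finset.sum_congr rfl fun r _ => by rw [← h1 r]
        _ = ∑ r' : C (A.actI g⁻¹ i), ρ1 (A.actI g⁻¹ i) r'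
              * P (A.actI g⁻¹ i) r' (A.act s0 g⁻¹ i t) :=
            (A.act_bijective s0 g⁻¹ i).sum_comp
              (fun r' => ρ1 (A.actI g⁻¹ i) r' * P (A.actI g⁻¹ i) r' (A.act s0 g⁻¹ i t))
        _ = ρ1 (A.actI g⁻¹ i) (A.act s0 g⁻¹ i t) := hρ1stat _ _
    calc ∑ r, ρ i r * P i r t
        = ∑ r, (∑ g : G, ρ1 (A.actI g⁻¹ i) (A.act s0 g⁻¹ i r) * P i r t) / N := by
          refine Finset.sum_congr rfl fun r _ => ?_
          simp only [hρ]
          rw [div_mul_eq_mul_div, Finset.sum_mul]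
      _ = (∑ g : G, ∑ r, ρ1 (A.actI g⁻¹ i) (A.act s0 g⁻¹ i r) * P i r t) / N := by
          rw [← Finset.sum_div, Finset.sum_comm]
      _ = (∑ g : G, ρ1 (A.actI g⁻¹ i) (A.act s0 g⁻¹ i t)) / N := by
          rw [Finset.sum_congr rfl fun g _ => hpull g]
      _ = ρ i t := rfl
  have hρinv : ∀ (g : G) (i : I) (c : C i),
      ρ (A.actI g i) (A.act s0 g i c) = ρ i c := by
    intro g i c
    simp only [hρ]
    congr 1
    have hterm : ∀ h : G,
        ρ1 (A.actI h⁻¹ (A.actI g i)) (A.act s0 h⁻¹ (A.actI g i) (A.act s0 g i c))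
        = ρ1 (A.actI (h⁻¹ * g) i) (A.act s0 (h⁻¹ * g) i c) :=
      fun h => apply2_congr (A.actI_mul h⁻¹ g i).symm
        (A.act_mul_heq s0 h⁻¹ g i c).symm ρ1
    rw [Finset.sum_congr rfl fun h _ => hterm h]
    refine Fintype.sum_equiv (Equiv.mulLeft g⁻¹) _ _ ?_
    intro x
    have he : x⁻¹ * g = (g⁻¹ * x)⁻¹ := by group
    simp only [Equiv.coe_mulLeft]
    exact congrArg (fun k => ρ1 (A.actI k i) (A.act s0 k i c)) he
  -- the invariant product distribution
  set π : (∀ j, C j) → ℝ := fun s => ∏ i, ρ i (s i) with hπ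
  have hπinv : ∀ g : G, (fun s => π (A.actS g s)) = π := by
    intro g
    funext s
    simp only [hπ]
    refine (Fintype.prod_bijective (A.actI g) (A.actI_bijective g)
      (fun i => ρ i (s i)) (fun j => ρ j (A.actS g s j)) ?_).symm
    intro i
    rw [A.star s0 g s i, hρinv g i (s i)]
  refine ⟨π, ⟨⟨ρ, hρmem, rfl⟩, hπinv⟩, ?_⟩
  -- value of the auxiliary game is at most 0
  have hval : gameValue (uM0 u) ≤ 0 := by
    obtain ⟨i0⟩ := hInonempty
    obtain ⟨c0⟩ := hCnonempty i0
    refine gameValue_le_zero (uM0 u) ⟨i0, (c0, c0)⟩ ?_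
    intro s
    simp only [uM0]
    by_cases hc : c0 = s i0
    · rw [if_pos hc, hc, Function.update_eq_self, sub_self]
    · rw [if_neg hc]
  -- expPay against θb equals expPay against θ
  have hstep1 : expPay (uM0 u) π θb = expPay (uM0 u) π θ := by
    have hE : ∀ g : G,
        (∑ s : ∀ j, C j, ∑ p : Σ i : I, C i × C i, π s * θ (A.actB s0 g p) * uM0 u s p)
        = expPay (uM0 u) π θ := by
      intro g
      have hswap : ∀ s, ∑ p : Σ i : I, C i × C i, π s * θ (A.actB s0 g p) * uM0 u s p
          = ∑ p : Σ i : I, C i × C i, π s * θ p * uM0 u s (A.actB s0 g⁻¹ p) := by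
        intro s
        refine Fintype.sum_bijective (A.actB s0 g) (A.actB_bijective s0 g) _ _ ?_
        intro p
        have h1 : A.actB s0 g⁻¹ (A.actB s0 g p) = p := by
          rw [← A.actB_mul, inv_mul_cancel, A.actB_one]
        rw [h1]
      have hu : ∀ (s) (p), uM0 u s (A.actB s0 g⁻¹ p) = uM0 u (A.actS g s) p := by
        intro s p
        have h2 := uM0_equivariant A s0 g⁻¹ (A.actS g s) p
        rw [← A.actS_mul, inv_mul_cancel, A.actS_one] at h2
        exact h2
      calc ∑ s : ∀ j, C j, ∑ p : Σ i : I, C i × C i, π s * θ (A.actB s0 g p) * uM0 u s p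
          = ∑ s : ∀ j, C j, ∑ p : Σ i : I, C i × C i,
              π s * θ p * uM0 u (A.actS g s) p := by
            refine Finset.sum_congr rfl fun s _ => ?_
            rw [hswap s]
            exact Finset.sum_congr rfl fun p _ => by rw [hu s p]
        _ = ∑ p : Σ i : I, C i × C i, ∑ s : ∀ j, C j,
              π s * θ p * uM0 u (A.actS g s) p := Finset.sum_comm
        _ = ∑ p : Σ i : I, C i × C i, ∑ s : ∀ j, C j, π s * θ p * uM0 u s p := by
            refine Finset.sum_congr rfl fun p _ => ?_
            refine Fintype.sum_bijective (A.actS g) (A.actS_bijective g) _ _ ?_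
            intro s
            rw [show π (A.actS g s) = π s from congrFun (hπinv g) s]
        _ = expPay (uM0 u) π θ := by rw [expPay, Finset.sum_comm]
    calc expPay (uM0 u) π θb
        = ∑ s : ∀ j, C j, ∑ p : Σ i : I, C i × C i,
            (∑ g : G, π s * θ (A.actB s0 g p) * uM0 u s p) / N := by
          rw [expPay]
          refine Finset.sum_congr rfl fun s _ => Finset.sum_congr rfl fun p _ => ?_
          simp only [hθb]
          rw [show (∑ g : G, π s * θ (A.actB s0 g p) * uM0 u s p)
              = (∑ g : G, θ (A.actB s0 g p)) * (π s * uM0 u s p) from by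
            rw [Finset.sum_mul]; exact Finset.sum_congr rfl fun g _ => by ring]
          ring
      _ = (∑ g : G, ∑ s : ∀ j, C j, ∑ p : Σ i : I, C i × C i,
            π s * θ (A.actB s0 g p) * uM0 u s p) / N := by
          rw [show (∑ s : ∀ j, C j, ∑ p : Σ i : I, C i × C i,
              (∑ g : G, π s * θ (A.actB s0 g p) * uM0 u s p) / N)
              = (∑ s : ∀ j, C j, ∑ p : Σ i : I, C i × C i,
              ∑ g : G, π s * θ (A.actB s0 g p) * uM0 u s p) / N from by
            rw [Finset.sum_div]
            exact Finset.sum_congr rfl fun s _ => by rw [Finset.sum_div]]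
          congr 1
          rw [show (∑ s : ∀ j, C j, ∑ p : Σ i : I, C i × C i,
              ∑ g : G, π s * θ (A.actB s0 g p) * uM0 u s p)
              = ∑ s : ∀ j, C j, ∑ g : G, ∑ p : Σ i : I, C i × C i,
              π s * θ (A.actB s0 g p) * uM0 u s p from
            Finset.sum_congr rfl fun s _ => Finset.sum_comm]
          exact Finset.sum_comm
      _ = (∑ g : G, expPay (uM0 u) π θ) / N := by
          rw [Finset.sum_congr rfl fun g _ => hE g]
      _ = expPay (uM0 u) π θ := by
          simp only [Finset.sum_const, Finset.card_univ, nsmul_eq_mul]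
          rw [← hN, mul_div_cancel_left₀ _ hNpos.ne']
  -- expPay against θb is zero
  have hzero : expPay (uM0 u) π θb = 0 := by
    set W : ∀ i : I, C i → ℝ :=
      fun i c => ∑ s : ∀ j, C j, π s * u i (Function.update s i c) with hW
    have hinner : ∀ (i : I) (r t : C i),
        (∑ s : ∀ j, C j, π s * uM0 u s ⟨i, (r, t)⟩)
        = ρ i r * W i r - ρ i r * W i t := by
      intro i r t
      have h1 : ∀ s : ∀ j, C j, π s * uM0 u s ⟨i, (r, t)⟩
          = (if s i = r then π s * u i (Function.update s i r) else 0)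
            - (if s i = r then π s * u i (Function.update s i t) else 0) := by
        intro s
        simp only [uM0]
        by_cases hs : s i = r
        · have hupd : Function.update s i r = s := by
            rw [← hs]; exact Function.update_eq_self i s
          rw [if_pos hs.symm, if_pos hs, if_pos hs, hupd]
          ring
        · rw [if_neg (fun hc => hs hc.symm), if_neg hs, if_neg hs]
          ring
      rw [Finset.sum_congr rfl fun s _ => h1 s, Finset.sum_sub_distrib]
      have h2 := prod_slice ρ hρmem i r r (u i)
      have h3 := prod_slice ρ hρmem i r t (u i)
      simp only [hπ, hW]
      rw [h2, h3]
    have hmain : expPay (uM0 u) π θb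
        = ∑ i : I, ∑ r : C i, ∑ t : C i,
            w i r t * (ρ i r * W i r - ρ i r * W i t) := by
      rw [expPay, Finset.sum_comm]
      rw [show (∑ p : Σ i : I, C i × C i, ∑ s : ∀ j, C j, π s * θb p * uM0 u s p)
          = ∑ p : Σ i : I, C i × C i, θb p * ∑ s : ∀ j, C j, π s * uM0 u s p from
        Finset.sum_congr rfl fun p _ => by
          rw [Finset.mul_sum]; exact Finset.sum_congr rfl fun s _ => by ring]
      rw [← Finset.univ_sigma_univ, Finset.sum_sigma]
      refine Finset.sum_congr rfl fun i _ => ?_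
      rw [Fintype.sum_prod_type]
      refine Finset.sum_congr rfl fun r _ => Finset.sum_congr rfl fun t _ => ?_
      rw [hinner i r t]
    rw [hmain]
    apply Finset.sum_eq_zero
    intro i _
    have hbal : ∀ t : C i, ∑ r, ρ i r * w i r t = ρ i t * z i t := by
      intro t
      have h1 := hρstat i t
      have h2 : ∀ r : C i, ρ i r * P i r t
          = ρ i r * w i r t + (if t = r then ρ i r * (1 - z i r) else 0) := by
        intro r
        by_cases hr : t = r
        · show ρ i r * (w i r t + if t = r then 1 - z i r else 0) = _
          rw [if_pos hr, if_pos hr]; ring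
        · show ρ i r * (w i r t + if t = r then 1 - z i r else 0) = _
          rw [if_neg hr, if_neg hr]; ring
      rw [Finset.sum_congr rfl fun r _ => h2 r, Finset.sum_add_distrib,
        Finset.sum_ite_eq Finset.univ t (fun r => ρ i r * (1 - z i r))] at h1
      simp only [Finset.mem_univ, if_true] at h1
      linear_combination h1
    calc ∑ r : C i, ∑ t : C i, w i r t * (ρ i r * W i r - ρ i r * W i t)
        = (∑ r : C i, ∑ t : C i, w i r t * (ρ i r * W i r))
          - ∑ r : C i, ∑ t : C i, w i r t * (ρ i r * W i t) := by
          rw [← Finset.sum_sub_distrib]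
          refine Finset.sum_congr rfl fun r _ => ?_
          rw [← Finset.sum_sub_distrib]
          exact Finset.sum_congr rfl fun t _ => by ring
      _ = (∑ r : C i, z i r * (ρ i r * W i r))
          - ∑ t : C i, (ρ i t * z i t) * W i t := by
          congr 1
          · refine Finset.sum_congr rfl fun r _ => ?_
            rw [← Finset.sum_mul]
          · rw [Finset.sum_comm]
            refine Finset.sum_congr rfl fun t _ => ?_
            rw [← hbal t, Finset.sum_mul]
            exact Finset.sum_congr rfl fun r _ => by ring
      _ = 0 := by
          rw [sub_eq_zero]
          exact Finset.sum_congr rfl fun r _ => by ring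
  show gameValue (uM0 u) ≤ expPay (uM0 u) π θ
  exact hval.trans (le_of_eq (hzero.symm.trans hstep1))
end
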